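/- arXiv:2604.02264 — 2 statements merged into one kernel-verified Lean document; each statement's English description precedes it below -/
import Mathlib

section
/- Let F be r-semi-bounded with respect to (S, T, v*). For every ν ⊆ V(F) with e(F[ν]) ≥ 1 we have f(ν) ≤ −(r−1)(|S ∩ ν| − 1) + r(|ν| − 2) + 1. -/
/-! Writing `s = |S ∩ ν|` and `t = |T ∩ ν|`, the right-hand side is at least `s + r (t - 1)`,
so it suffices that `∑_{T ∩ ν} deg - max ≤ r (t - 1)`. An induced edge joins some `w₀ ∈ T ∩ ν`
to some `u ∈ S ∩ ν`; take `w = v*` if `v* ∈ ν` (it is adjacent to `u`), and `w = w₀` otherwise.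
Then `w` competes for the maximum, and every other vertex of `T ∩ ν` differs from `v*`,
so has degree at most `r`. -/

open Finset

/-- Number of edges of `F` induced by the vertex set `ν`. -/
def eInd {V : Type*} [Fintype V] [DecidableEq V] (F : SimpleGraph V) [DecidableRel F.Adj]
    (ν : Finset V) : ℕ :=
  (F.edgeFinset.filter (fun e => ∀ v ∈ e, v ∈ ν)).card

/-- The quantity `f(ν) = |S ∩ ν| + Σ_{v ∈ T ∩ ν} deg_F(v) -
max{deg_F(v) : v ∈ T ∩ ν with a neighbour in ν}` for an `r`-semi-bounded graph `F`. -/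
def fI {V : Type*} [Fintype V] [DecidableEq V] (F : SimpleGraph V) [DecidableRel F.Adj]
    (S T ν : Finset V) : ℤ :=
  ((S ∩ ν).card : ℤ) + ∑ v ∈ T ∩ ν, (F.degree v : ℤ)
    - (((T ∩ ν).filter (fun v => ∃ u ∈ ν, F.Adj v u)).sup (fun v => F.degree v) : ℕ)

theorem Finset.sum_le_add_mul_card_sub_one {α R : Type*} [DecidableEq α] [CommRing R]
    [LinearOrder R] [IsOrderedRing R] {A : Finset α} {d : α → R} {w : α} {r : R} (hw : w ∈ A)
    (hd : ∀ v ∈ A, v ≠ w → d v ≤ r) :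
    ∑ v ∈ A, d v ≤ d w + r * (#A - 1) := by
  rw [← add_sum_erase A d hw]
  have hrest := sum_le_card_nsmul (A.erase w) d r
    fun v hv => hd v (mem_of_mem_erase hv) (ne_of_mem_erase hv)
  rw [card_erase_of_mem hw, nsmul_eq_mul, Nat.cast_sub (card_pos.mpr ⟨w, hw⟩)] at hrest
  push_cast at hrest
  exact add_le_add_right (mul_comm r _ ▸ hrest) _

theorem Finset.card_inter_add_card_inter_le {α : Type*} [DecidableEq α] {S T : Finset α}
    (ν : Finset α) (h : Disjoint S T) : #(S ∩ ν) + #(T ∩ ν) ≤ #ν := by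
  rw [← card_union_of_disjoint (h.mono inter_subset_left inter_subset_left)]
  exact card_le_card (union_subset inter_subset_right inter_subset_right)

section SemiBounded

variable {V : Type*} [DecidableEq V] {F : SimpleGraph V} [DecidableRel F.Adj]
  {S T ν : Finset V}

theorem exists_adj_of_eInd_pos [Fintype V] (h : 0 < eInd F ν) : ∃ a ∈ ν, ∃ b ∈ ν, F.Adj a b := by
  obtain ⟨e, he⟩ := card_pos.mp h
  rw [mem_filter, SimpleGraph.mem_edgeFinset] at he
  induction e using Sym2.ind with
  | _ a b => exact ⟨a, he.2 a (Sym2.mem_mk_left a b), b, he.2 b (Sym2.mem_mk_right a b), he.1⟩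

theorem exists_adj_inter_of_eInd_pos [Fintype V]
    (hBip : ∀ u v, F.Adj u v → (u ∈ S ∧ v ∈ T) ∨ (u ∈ T ∧ v ∈ S))
    (h : 0 < eInd F ν) : ∃ w ∈ T ∩ ν, ∃ u ∈ S ∩ ν, F.Adj w u := by
  obtain ⟨a, ha, b, hb, hab⟩ := exists_adj_of_eInd_pos h
  rcases hBip a b hab with ⟨haS, hbT⟩ | ⟨haT, hbS⟩
  · exact ⟨b, mem_inter.2 ⟨hbT, hb⟩, a, mem_inter.2 ⟨haS, ha⟩, hab.symm⟩
  · exact ⟨a, mem_inter.2 ⟨haT, ha⟩, b, mem_inter.2 ⟨hbS, hb⟩, hab⟩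

theorem exists_mem_filter_adj_forall_ne {vstar w₀ u : V} (hv : vstar ∈ T)
    (hComp : ∀ u ∈ S, F.Adj vstar u) (hw₀ : w₀ ∈ T ∩ ν) (hu : u ∈ S ∩ ν) (hadj : F.Adj w₀ u) :
    ∃ w ∈ (T ∩ ν).filter (fun v => ∃ u ∈ ν, F.Adj v u), ∀ v ∈ T ∩ ν, v ≠ w → v ≠ vstar := by
  obtain ⟨huS, huν⟩ := mem_inter.1 hu
  by_cases hvν : vstar ∈ ν
  · exact ⟨vstar, mem_filter.2 ⟨mem_inter.2 ⟨hv, hvν⟩, u, huν, hComp u huS⟩, fun _ _ hne => hne⟩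
  · exact ⟨w₀, mem_filter.2 ⟨hw₀, u, huν, hadj⟩,
      fun v hvT _ hvs => hvν (hvs ▸ (mem_inter.1 hvT).2)⟩

end SemiBounded

theorem stmt6_general {V : Type*} [Fintype V] [DecidableEq V] (F : SimpleGraph V) [DecidableRel F.Adj]
    (S T : Finset V) (vstar : V) (r : ℕ)
    (hDisj : Disjoint S T)
    (hBip : ∀ u v, F.Adj u v → (u ∈ S ∧ v ∈ T) ∨ (u ∈ T ∧ v ∈ S))
    (hv : vstar ∈ T) (hComp : ∀ u ∈ S, F.Adj vstar u)
    (hDeg : ∀ v ∈ T, v ≠ vstar → F.degree v ≤ r)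
    (ν : Finset V) (hν : 1 ≤ eInd F ν) :
    fI F S T ν ≤ -((r : ℤ) - 1) * (((S ∩ ν).card : ℤ) - 1) + (r : ℤ) * ((ν.card : ℤ) - 2) + 1 := by
  obtain ⟨w₀, hw₀, u, hu, hadj⟩ := exists_adj_inter_of_eInd_pos hBip hν
  obtain ⟨w, hwA, hwne⟩ := exists_mem_filter_adj_forall_ne hv hComp hw₀ hu hadj
  have hsum := sum_le_add_mul_card_sub_one (d := fun v => (F.degree v : ℤ)) (r := r)
    (mem_filter.1 hwA).1 fun v hvT hne => by
      exact_mod_cast hDeg v (mem_inter.1 hvT).1 (hwne v hvT hne)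
  have hmax : (F.degree w : ℤ)
      ≤ (((T ∩ ν).filter (fun v => ∃ u ∈ ν, F.Adj v u)).sup (fun v => F.degree v) : ℕ) := by
    exact_mod_cast le_sup (f := fun v => F.degree v) hwA
  have hrest : (0 : ℤ) ≤ r * (#ν - #(S ∩ ν) - #(T ∩ ν)) := by
    have := card_inter_add_card_inter_le ν hDisj
    exact mul_nonneg (Nat.cast_nonneg r) (by omega)
  unfold fI
  linarith

/-- If `F` is `r`-semi-bounded with respect to `(S, T, v*)` and `ν ⊆ V(F)` has `e(F[ν]) ≥ 1`,
then `f(ν) ≤ -(r-1)(|S ∩ ν| - 1) + r(|ν| - 2) + 1`. -/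
theorem stmt6 {V : Type*} [Fintype V] [DecidableEq V] (F : SimpleGraph V) [DecidableRel F.Adj]
    (S T : Finset V) (vstar : V) (r : ℕ)
    (hUnion : S ∪ T = Finset.univ) (hDisj : Disjoint S T)
    (hBip : ∀ u v, F.Adj u v → (u ∈ S ∧ v ∈ T) ∨ (u ∈ T ∧ v ∈ S))
    (hv : vstar ∈ T) (hComp : ∀ u ∈ S, F.Adj vstar u)
    (hDeg : ∀ v ∈ T, v ≠ vstar → F.degree v ≤ r)
    (ν : Finset V) (hν : 1 ≤ eInd F ν) :
    fI F S T ν ≤ -((r : ℤ) - 1) * (((S ∩ ν).card : ℤ) - 1) + (r : ℤ) * ((ν.card : ℤ) - 2) + 1 :=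
  stmt6_general F S T vstar r hDisj hBip hv hComp hDeg ν hν
end

section
/- Let F be r-semi-bounded with respect to (S, T, v*) and suppose F contains a cycle. Then B_F is non-empty: there exists ν ⊆ V(F) with minimum degree of F[ν] at least 1 and f(ν) > e(F[ν]). -/
open Finset

/-!
If every vertex of `T` other than `vstar` had degree at most one, then counting the edges inside
a nonempty `ν` from their `T`-endpoints would give fewer than `|ν|` of them: at most
`|S ∩ ν| + |T ∩ ν| - 1` if `vstar ∈ ν`, and otherwise at most `|T ∩ ν| < |ν|` (or none at all when
`S ∩ ν = ∅`). So the cycle forces some `v ∈ T \ {vstar}` of degree at least two. For a neighbour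
`u` of `v`, the triple `{u, v, vstar}` spans at most two edges, while
`f = 1 + min (deg v) (deg vstar) ≥ 3` because `deg vstar ≥ |S| ≥ deg v`.
-/

section

variable {α : Type*} [DecidableEq α] {S T : Finset α}

lemma inter_triple_eq_left (hdisj : Disjoint S T) {u v w : α} (hu : u ∈ S) (hv : v ∈ T)
    (hw : w ∈ T) : S ∩ {u, v, w} = {u} := by
  simp [inter_insert_of_mem hu, inter_insert_of_notMem (disjoint_right.1 hdisj hv),
    inter_singleton_of_notMem (disjoint_right.1 hdisj hw)]

lemma inter_triple_eq_right (hdisj : Disjoint S T) {u v w : α} (hu : u ∈ S) (hv : v ∈ T)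
    (hw : w ∈ T) : T ∩ {u, v, w} = {v, w} := by
  simp [inter_insert_of_mem hv, inter_insert_of_notMem (disjoint_left.1 hdisj hu),
    inter_singleton_of_mem hw]

end

lemma SimpleGraph.IsBipartiteWith.mem_or_mem_right {V : Type*} {G : SimpleGraph V} {s t : Set V}
    (h : G.IsBipartiteWith s t) {a b : V} (hab : G.Adj a b) : a ∈ t ∨ b ∈ t :=
  ((h.mem_of_adj hab).imp (fun h => h.2) (fun h => h.1)).symm

open SimpleGraph

section

variable {V : Type*} [Fintype V] [DecidableEq V] {F : SimpleGraph V} [DecidableRel F.Adj]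

lemma one_le_eInd_of_adj {ν : Finset V} {a b : V} (hab : F.Adj a b) (ha : a ∈ ν) (hb : b ∈ ν) :
    1 ≤ eInd F ν :=
  card_pos.mpr ⟨s(a, b), by simp [hab, ha, hb]⟩

lemma eInd_le_sum_card_neighborFinset_inter {T : Finset V}
    (hT : ∀ ⦃a b⦄, F.Adj a b → a ∈ T ∨ b ∈ T) (ν : Finset V) :
    eInd F ν ≤ ∑ y ∈ T ∩ ν, #(F.neighborFinset y ∩ ν) :=
  calc eInd F ν ≤ #((T ∩ ν).biUnion fun y => (F.neighborFinset y ∩ ν).image (s(·, y))) := by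
        refine card_le_card fun e he => ?_
        induction e using Sym2.ind with | _ a b => ?_
        simp only [mem_filter, mem_edgeFinset, mem_edgeSet,
          Sym2.forall_mem_pair] at he
        obtain ⟨hab, ha, hb⟩ := he
        simp only [mem_biUnion, mem_inter, mem_image, mem_neighborFinset]
        rcases hT hab with haT | hbT
        · exact ⟨a, ⟨haT, ha⟩, b, ⟨hab, hb⟩, Sym2.eq_swap⟩
        · exact ⟨b, ⟨hbT, hb⟩, a, ⟨hab.symm, ha⟩, rfl⟩
    _ ≤ ∑ y ∈ T ∩ ν, #((F.neighborFinset y ∩ ν).image (s(·, y))) := card_biUnion_le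
    _ ≤ _ := sum_le_sum fun _ _ => card_image_le

variable {S T : Finset V}

lemma eInd_le_card_mul_card (hST : F.IsBipartiteWith S T) (ν : Finset V) :
    eInd F ν ≤ #(T ∩ ν) * #(S ∩ ν) := by
  refine (eInd_le_sum_card_neighborFinset_inter (fun _ _ => hST.mem_or_mem_right) ν).trans ?_
  exact sum_le_card_nsmul _ _ _ fun y hy => card_le_card <|
    inter_subset_inter_right (isBipartiteWith_neighborFinset_subset' hST (mem_inter.1 hy).1)

lemma eInd_lt_card_of_degree_le_one (hST : F.IsBipartiteWith S T) {vstar : V} (hv : vstar ∈ T)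
    (hdeg : ∀ y ∈ T, y ≠ vstar → F.degree y ≤ 1) {ν : Finset V} (hν : ν.Nonempty) :
    eInd F ν < #ν := by
  set load : V → ℕ := fun y => #(F.neighborFinset y ∩ ν)
  have hload_S : ∀ y ∈ T, load y ≤ #(S ∩ ν) := fun y hy =>
    card_le_card (inter_subset_inter_right (isBipartiteWith_neighborFinset_subset' hST hy))
  have hload_one : ∀ y ∈ T, y ≠ vstar → load y ≤ 1 := fun y hy hne =>
    (card_le_card inter_subset_left).trans
      ((F.card_neighborFinset_eq_degree y).trans_le (hdeg y hy hne))
  have hcard : #(S ∩ ν) + #(T ∩ ν) ≤ #ν := by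
    rw [← card_union_of_disjoint
      ((disjoint_coe.1 hST.disjoint).mono inter_subset_left inter_subset_left)]
    exact card_le_card (union_subset inter_subset_right inter_subset_right)
  have key : eInd F ν ≤ ∑ y ∈ T ∩ ν, load y :=
    eInd_le_sum_card_neighborFinset_inter (fun _ _ => hST.mem_or_mem_right) ν
  by_cases hvν : vstar ∈ ν
  · have hvTν : vstar ∈ T ∩ ν := mem_inter.2 ⟨hv, hvν⟩
    have hTν_pos := card_pos.2 ⟨vstar, hvTν⟩
    calc eInd F ν ≤ load vstar + ∑ y ∈ (T ∩ ν).erase vstar, load y := by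
          rwa [add_sum_erase _ _ hvTν]
      _ ≤ #(S ∩ ν) + #((T ∩ ν).erase vstar) * 1 :=
          add_le_add (hload_S vstar hv) <| sum_le_card_nsmul _ _ _ fun y hy =>
            hload_one y (mem_inter.1 (mem_of_mem_erase hy)).1 (ne_of_mem_erase hy)
      _ < #ν := by rw [card_erase_of_mem hvTν]; omega
  · calc eInd F ν ≤ #(T ∩ ν) * min 1 #(S ∩ ν) :=
          key.trans <| sum_le_card_nsmul _ _ _ fun y hy =>
            le_min (hload_one y (mem_inter.1 hy).1 (ne_of_mem_of_not_mem (mem_inter.1 hy).2 hvν))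
              (hload_S y (mem_inter.1 hy).1)
      _ < #ν := by
          rcases Nat.eq_zero_or_pos #(S ∩ ν) with h | h
          · simpa [h] using hν.card_pos
          · rw [min_eq_left h, mul_one]; omega

lemma fI_triple (hdisj : Disjoint S T) {u v w : V} (hu : u ∈ S) (hv : v ∈ T) (hw : w ∈ T)
    (hvw : v ≠ w) (huv : F.Adj u v) (huw : F.Adj u w) :
    fI F S T {u, v, w} = 1 + min (F.degree v) (F.degree w) := by
  have hactive :
      ((T ∩ {u, v, w}).filter fun y => ∃ x ∈ ({u, v, w} : Finset V), F.Adj y x) = {v, w} := by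
    rw [inter_triple_eq_right hdisj hu hv hw]
    refine filter_true_of_mem fun y hy => ⟨u, by simp, ?_⟩
    rcases mem_insert.1 hy with rfl | hy
    · exact huv.symm
    · exact mem_singleton.1 hy ▸ huw.symm
  rw [fI, hactive, inter_triple_eq_left hdisj hu hv hw, inter_triple_eq_right hdisj hu hv hw,
    sum_pair hvw]
  simp only [card_singleton, Nat.cast_one, sup_insert, sup_singleton, Nat.cast_max, Nat.cast_min]
  omega

end

theorem stmt11_general {V : Type*} [Fintype V] [DecidableEq V] (F : SimpleGraph V) [DecidableRel F.Adj]
    (S T : Finset V) (vstar : V)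
    (hDisj : Disjoint S T)
    (hBip : ∀ u v, F.Adj u v → (u ∈ S ∧ v ∈ T) ∨ (u ∈ T ∧ v ∈ S))
    (hv : vstar ∈ T) (hComp : ∀ u ∈ S, F.Adj vstar u)
    (hcycle : ∃ ν : Finset V, ν.Nonempty ∧ ν.card ≤ eInd F ν) :
    ∃ ν : Finset V, 1 ≤ eInd F ν ∧ (∀ w ∈ ν, ∃ u ∈ ν, F.Adj w u) ∧
      (eInd F ν : ℤ) < fI F S T ν := by
  have hST : F.IsBipartiteWith S T := ⟨disjoint_coe.2 hDisj, hBip⟩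
  obtain ⟨v, hvT, hvne, hdv⟩ : ∃ v ∈ T, v ≠ vstar ∧ 2 ≤ F.degree v := by
    by_contra! hsmall
    obtain ⟨ν, hν, hcard⟩ := hcycle
    exact hcard.not_gt <| eInd_lt_card_of_degree_le_one hST hv
      (fun y hy hne => Nat.le_of_lt_succ (hsmall y hy hne)) hν
  obtain ⟨u, hvu⟩ := F.degree_pos_iff_exists_adj v |>.1 (by omega)
  have huS : u ∈ S :=
    isBipartiteWith_neighborFinset_subset' hST hvT ((F.mem_neighborFinset v u).2 hvu)
  have hdeg : F.degree v ≤ F.degree vstar := by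
    simp only [← F.card_neighborFinset_eq_degree]
    exact card_le_card fun x hx => (F.mem_neighborFinset _ _).2 <| hComp x <|
      isBipartiteWith_neighborFinset_subset' hST hvT hx
  refine ⟨{u, v, vstar}, one_le_eInd_of_adj hvu.symm (by simp) (by simp), ?_, ?_⟩
  · simp only [mem_insert, mem_singleton, forall_eq_or_imp, forall_eq]
    exact ⟨⟨vstar, by simp, (hComp u huS).symm⟩, ⟨u, by simp, hvu⟩, ⟨u, by simp, hComp u huS⟩⟩
  · have hcount := eInd_le_card_mul_card hST {u, v, vstar}
    rw [inter_triple_eq_left hDisj huS hvT hv, inter_triple_eq_right hDisj huS hvT hv,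
      card_pair hvne, card_singleton] at hcount
    rw [fI_triple hDisj huS hvT hv hvne hvu.symm (hComp u huS).symm]
    omega

/-- If `F` is `r`-semi-bounded with respect to `(S, T, v*)` and contains a cycle, then `B_F` is
non-empty: some `ν ⊆ V(F)` has minimum induced degree at least 1 and `f(ν) > e(F[ν])`. -/
theorem stmt11 {V : Type*} [Fintype V] [DecidableEq V] (F : SimpleGraph V) [DecidableRel F.Adj]
    (S T : Finset V) (vstar : V) (r : ℕ)
    (hUnion : S ∪ T = Finset.univ) (hDisj : Disjoint S T)
    (hBip : ∀ u v, F.Adj u v → (u ∈ S ∧ v ∈ T) ∨ (u ∈ T ∧ v ∈ S))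
    (hv : vstar ∈ T) (hComp : ∀ u ∈ S, F.Adj vstar u)
    (hDeg : ∀ v ∈ T, v ≠ vstar → F.degree v ≤ r)
    (hcycle : ∃ ν : Finset V, ν.Nonempty ∧ ν.card ≤ eInd F ν) :
    ∃ ν : Finset V, 1 ≤ eInd F ν ∧ (∀ w ∈ ν, ∃ u ∈ ν, F.Adj w u) ∧
      (eInd F ν : ℤ) < fI F S T ν :=
  stmt11_general F S T vstar hDisj hBip hv hComp hcycle
end
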